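/- Let k ≥ 1 and let λ = (λ_1, λ_2, …, λ_{2k}) be a partition with exactly 2k parts, all parts odd and pairwise distinct (so λ_1 > λ_2 > ⋯ > λ_{2k} > 0). Define α = ((λ_1+1)/2, …, (λ_k+1)/2, (λ_{k+1}−1)/2, …, (λ_{2k}−1)/2) and β = ((λ_1−1)/2, …, (λ_k−1)/2, (λ_{k+1}+1)/2, …, (λ_{2k}+1)/2). Then α and β are partitions and the Littlewood–Richardson coefficient c^λ_{αβ} is at least 1. -/

import Mathlib

/-- A partition: a weakly decreasing finite sequence (list) of positive
integers. -/
def IsPartition (l : List ℕ) : Prop :=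
  l.Pairwise (· ≥ ·) ∧ ∀ x ∈ l, 0 < x

/-- The `i`-th part (0-indexed) of a partition, `0` beyond its length. -/
def part (l : List ℕ) (i : ℕ) : ℕ := l.getD i 0

/-- Cell `(i, j)` (row `i`, column `j`, both 0-indexed) lies in the skew
Young diagram `ν/λ`. -/
def InSkew (nu lam : List ℕ) (i j : ℕ) : Prop :=
  part lam i ≤ j ∧ j < part nu i

/-- Cell `(i, j)` comes weakly before cell `(r, c)` in the reverse reading
order: rows are read top to bottom, and each row is read right to left. -/
def ReadingLE (i j r c : ℕ) : Prop := i < r ∨ (i = r ∧ c ≤ j)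

/-- `T` is a Littlewood–Richardson tableau of shape `ν/λ` and content `μ`:
`λ ⊆ ν`, the entries of `T` are positive exactly on the cells of the skew
diagram `ν/λ`, entries weakly increase from left to right along rows,
entries strictly increase from top to bottom down columns, for every `j ≥ 1`
the entry `j` occurs exactly `μ_j` times, and the reverse reading word is a
lattice word: every prefix contains at least as many occurrences of `j` as
of `j + 1`, for every `j ≥ 1`. -/
structure IsLRTableau (nu lam mu : List ℕ) (T : ℕ → ℕ → ℕ) : Prop where
  subset : ∀ i, part lam i ≤ part nu i
  support : ∀ i j, 0 < T i j ↔ InSkew nu lam i j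
  row_weak : ∀ i j j', InSkew nu lam i j → InSkew nu lam i j' → j ≤ j' →
    T i j ≤ T i j'
  col_strict : ∀ i i' j, InSkew nu lam i j → InSkew nu lam i' j → i < i' →
    T i j < T i' j
  content : ∀ k : ℕ, {p : ℕ × ℕ | T p.1 p.2 = k + 1}.ncard = part mu k
  lattice : ∀ r c k : ℕ,
    {p : ℕ × ℕ | T p.1 p.2 = k + 2 ∧ ReadingLE p.1 p.2 r c}.ncard ≤
    {p : ℕ × ℕ | T p.1 p.2 = k + 1 ∧ ReadingLE p.1 p.2 r c}.ncard

/-- The Littlewood–Richardson coefficient `c^ν_{λμ}`: the number of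
Littlewood–Richardson tableaux of shape `ν/λ` and content `μ`. -/
noncomputable def lrCoeff (nu lam mu : List ℕ) : ℕ :=
  {T : ℕ → ℕ → ℕ | IsLRTableau nu lam mu T}.ncard

/-- The Newell–Littlewood coefficient
`N^ν_{λμ} = Σ_{α,β,γ} c^λ_{αβ} · c^μ_{αγ} · c^ν_{βγ}`, the sum running over
all triples of partitions `(α, β, γ)` (only finitely many terms are
nonzero). -/
noncomputable def nlCoeff (lam mu nu : List ℕ) : ℕ :=
  ∑ᶠ x : {l : List ℕ // IsPartition l} × {l : List ℕ // IsPartition l} ×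
      {l : List ℕ // IsPartition l},
    lrCoeff lam x.1.val x.2.1.val * lrCoeff mu x.1.val x.2.2.val *
      lrCoeff nu x.2.1.val x.2.2.val

/-- The partition `α = ((λ₁+1)/2, …, (λ_k+1)/2, (λ_{k+1}−1)/2, …, (λ_{2k}−1)/2)`
associated to a partition `λ` with `2k` parts. -/
def distAlpha (k : ℕ) (lam : List ℕ) : List ℕ :=
  (List.range (2 * k)).map fun i =>
    if i < k then (part lam i + 1) / 2 else (part lam i - 1) / 2

/-- The partition `β = ((λ₁−1)/2, …, (λ_k−1)/2, (λ_{k+1}+1)/2, …, (λ_{2k}+1)/2)`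
associated to a partition `λ` with `2k` parts. -/
def distBeta (k : ℕ) (lam : List ℕ) : List ℕ :=
  (List.range (2 * k)).map fun i =>
    if i < k then (part lam i - 1) / 2 else (part lam i + 1) / 2

/-! The tableau that fills row `i` of `λ/α` with the letter `i + 1` has content
`(λ_i - α_i)_i = β`; it is column-strict trivially and its reading word is a
lattice word as soon as `β` is weakly decreasing.  Since the parts of `λ` are odd,
`λ_i - α_i = β_i`, and since they are distinct and odd, consecutive parts differ
by at least `2`, which is exactly what makes `β` weakly decreasing across the
middle index `k`. -/

section ListParts

lemma part_eq_getElem {l : List ℕ} {i : ℕ} (hi : i < l.length) : part l i = l[i] :=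
  List.getD_eq_getElem _ _ hi

lemma part_eq_zero_of_length_le {l : List ℕ} {i : ℕ} (hi : l.length ≤ i) : part l i = 0 :=
  List.getD_eq_default _ _ hi

lemma part_mem {l : List ℕ} {i : ℕ} (hi : i < l.length) : part l i ∈ l := by
  rw [part_eq_getElem hi]
  exact List.getElem_mem hi

lemma List.Pairwise.rel_part {R : ℕ → ℕ → Prop} {l : List ℕ} (h : l.Pairwise R) {i j : ℕ}
    (hij : i < j) (hj : j < l.length) : R (part l i) (part l j) := by
  rw [part_eq_getElem (hij.trans hj), part_eq_getElem hj]
  exact List.pairwise_iff_getElem.mp h i j _ hj hij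

lemma antitone_part {l : List ℕ} (h : l.Pairwise (· ≥ ·)) : Antitone (part l) := by
  intro i j hij
  rcases hij.eq_or_lt with rfl | hij
  · exact le_rfl
  rcases lt_or_ge j l.length with hj | hj
  · exact h.rel_part hij hj
  · simp [part_eq_zero_of_length_le hj]

lemma part_map_range (n : ℕ) (f : ℕ → ℕ) (i : ℕ) :
    part ((List.range n).map f) i = if i < n then f i else 0 := by
  split_ifs with h
  · simp [part_eq_getElem (l := (List.range n).map f) (by simpa using h)]
  · exact part_eq_zero_of_length_le (by simpa using h)

lemma pairwise_map_range_iff {R : ℕ → ℕ → Prop} {n : ℕ} {f : ℕ → ℕ} :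
    ((List.range n).map f).Pairwise R ↔ ∀ i j, i < j → j < n → R (f i) (f j) := by
  simp only [List.pairwise_iff_getElem, List.length_map, List.length_range,
    List.getElem_map, List.getElem_range]
  exact ⟨fun h i j hij hj => h i j (hij.trans hj) hj hij,
    fun h i j _ hj hij => h i j hij hj⟩

end ListParts

section Finiteness

lemma finite_setOf_support_subset_of_le {α β : Type*} {S : Set (α × β)} (hS : S.Finite)
    (M : ℕ) : {f : α → β → ℕ | ∀ i j, (0 < f i j → (i, j) ∈ S) ∧ f i j ≤ M}.Finite := by
  classical
  have := hS.to_subtype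
  refine (Set.finite_range fun g : S → Fin (M + 1) => fun i j =>
    if h : (i, j) ∈ S then (g ⟨(i, j), h⟩ : ℕ) else 0).subset ?_
  intro f hf
  refine ⟨fun p => ⟨f p.1.1 p.1.2, Nat.lt_succ_of_le (hf _ _).2⟩, ?_⟩
  funext i j
  by_cases h : (i, j) ∈ S
  · simp [h]
  · have := mt (hf i j).1 h
    simp [h]
    omega

lemma part_le_sum (l : List ℕ) (i : ℕ) : part l i ≤ l.sum := by
  rcases lt_or_ge i l.length with hi | hi
  · exact List.le_sum_of_mem (part_mem hi)
  · simp [part_eq_zero_of_length_le hi]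

lemma finite_setOf_inSkew (nu lam : List ℕ) :
    {p : ℕ × ℕ | InSkew nu lam p.1 p.2}.Finite := by
  refine ((Set.finite_Iio nu.length).prod (Set.finite_Iio nu.sum)).subset ?_
  rintro ⟨i, j⟩ ⟨-, hj⟩
  refine ⟨?_, hj.trans_le (part_le_sum nu i)⟩
  by_contra hi
  rw [part_eq_zero_of_length_le (not_lt.mp hi)] at hj
  exact Nat.not_lt_zero _ hj

namespace IsLRTableau

variable {nu lam mu : List ℕ} {T : ℕ → ℕ → ℕ}

lemma finite_setOf_eq_succ (hT : IsLRTableau nu lam mu T) (v : ℕ) :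
    {p : ℕ × ℕ | T p.1 p.2 = v + 1}.Finite :=
  (finite_setOf_inSkew nu lam).subset fun p hp =>
    (hT.support p.1 p.2).mp (by have : T p.1 p.2 = v + 1 := hp; omega)

lemma le_length (hT : IsLRTableau nu lam mu T) (i j : ℕ) : T i j ≤ mu.length := by
  by_contra! h
  obtain ⟨v, hv⟩ : ∃ v, T i j = v + 1 := ⟨T i j - 1, by omega⟩
  have hempty : {p : ℕ × ℕ | T p.1 p.2 = v + 1} = ∅ := by
    rw [← Set.ncard_eq_zero (hT.finite_setOf_eq_succ v), hT.content,
      part_eq_zero_of_length_le (by omega)]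
  exact Set.eq_empty_iff_forall_notMem.mp hempty (i, j) hv

end IsLRTableau

lemma finite_setOf_isLRTableau (nu lam mu : List ℕ) :
    {T : ℕ → ℕ → ℕ | IsLRTableau nu lam mu T}.Finite :=
  (finite_setOf_support_subset_of_le (finite_setOf_inSkew nu lam) mu.length).subset
    fun _ hT i j => ⟨(hT.support i j).mp, hT.le_length i j⟩

lemma lrCoeff_pos_of_isLRTableau {nu lam mu : List ℕ} {T : ℕ → ℕ → ℕ}
    (hT : IsLRTableau nu lam mu T) : 0 < lrCoeff nu lam mu :=
  (Set.ncard_pos (finite_setOf_isLRTableau nu lam mu)).mpr ⟨T, hT⟩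

end Finiteness

section RowTableau

def rowTableau (nu lam : List ℕ) (i j : ℕ) : ℕ :=
  if part lam i ≤ j ∧ j < part nu i then i + 1 else 0

variable {nu lam : List ℕ}

lemma rowTableau_pos_iff (i j : ℕ) : 0 < rowTableau nu lam i j ↔ InSkew nu lam i j := by
  unfold rowTableau InSkew
  split_ifs with h <;> simpa using h

lemma rowTableau_of_inSkew {i j : ℕ} (h : InSkew nu lam i j) : rowTableau nu lam i j = i + 1 :=
  if_pos h

lemma setOf_rowTableau_eq_succ (m : ℕ) :
    {p : ℕ × ℕ | rowTableau nu lam p.1 p.2 = m + 1} =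
      {m} ×ˢ Set.Ico (part lam m) (part nu m) := by
  ext ⟨i, j⟩
  simp only [rowTableau, Set.mem_ofPred_eq, Set.mem_prod, Set.mem_singleton_iff, Set.mem_Ico]
  split_ifs with h
  · constructor
    · intro h'
      obtain rfl : i = m := by omega
      exact ⟨rfl, h⟩
    · rintro ⟨rfl, -⟩; rfl
  · exact ⟨False.elim, fun ⟨hi, h'⟩ => h (hi ▸ h')⟩

lemma ncard_setOf_rowTableau_eq_succ (m : ℕ) :
    {p : ℕ × ℕ | rowTableau nu lam p.1 p.2 = m + 1}.ncard = part nu m - part lam m := by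
  rw [setOf_rowTableau_eq_succ, Set.ncard_prod, Set.ncard_singleton, Set.ncard_Ico_nat, one_mul]

lemma finite_setOf_rowTableau_eq_succ (m : ℕ) :
    {p : ℕ × ℕ | rowTableau nu lam p.1 p.2 = m + 1}.Finite := by
  rw [setOf_rowTableau_eq_succ]
  exact (Set.finite_singleton m).prod (Set.finite_Ico _ _)

/-- Every letter `m + 2` sits in row `m + 1`, below all the letters `m + 1`, so a prefix of
the reading word either contains no `m + 2` or contains all `μ_m ≥ μ_{m+1}` letters `m + 1`. -/
lemma rowTableau_lattice {mu : List ℕ} (hmu : ∀ i, part mu i = part nu i - part lam i)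
    (hanti : Antitone (part mu)) (r c m : ℕ) :
    {p : ℕ × ℕ | rowTableau nu lam p.1 p.2 = m + 2 ∧ ReadingLE p.1 p.2 r c}.ncard ≤
      {p : ℕ × ℕ | rowTableau nu lam p.1 p.2 = m + 1 ∧ ReadingLE p.1 p.2 r c}.ncard := by
  have hrow : ∀ {p : ℕ × ℕ} {n : ℕ}, rowTableau nu lam p.1 p.2 = n + 1 → p.1 = n :=
    fun {_ n} hp => ((setOf_rowTableau_eq_succ (nu := nu) (lam := lam) n).subset hp).1
  rcases le_or_gt r m with hrm | hrm
  · have hempty : {p : ℕ × ℕ | rowTableau nu lam p.1 p.2 = m + 2 ∧ ReadingLE p.1 p.2 r c} = ∅ :=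
      Set.eq_empty_of_forall_notMem fun p ⟨hp, hread⟩ => by
        have := hrow hp
        rcases hread with h | ⟨h, -⟩ <;> omega
    simp [hempty]
  · have hall : {p : ℕ × ℕ | rowTableau nu lam p.1 p.2 = m + 1 ∧ ReadingLE p.1 p.2 r c} =
        {p : ℕ × ℕ | rowTableau nu lam p.1 p.2 = m + 1} :=
      Set.ext fun p => ⟨And.left, fun hp => ⟨hp, Or.inl (hrow hp ▸ hrm)⟩⟩
    calc _ ≤ {p : ℕ × ℕ | rowTableau nu lam p.1 p.2 = (m + 1) + 1}.ncard :=
          Set.ncard_le_ncard (fun _ hp => hp.1) (finite_setOf_rowTableau_eq_succ _)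
      _ = part mu (m + 1) := by rw [ncard_setOf_rowTableau_eq_succ, hmu]
      _ ≤ part mu m := hanti m.le_succ
      _ = _ := by rw [hall, ncard_setOf_rowTableau_eq_succ, hmu]

lemma isLRTableau_rowTableau {mu : List ℕ} (hsub : ∀ i, part lam i ≤ part nu i)
    (hmu : ∀ i, part mu i = part nu i - part lam i) (hanti : Antitone (part mu)) :
    IsLRTableau nu lam mu (rowTableau nu lam) where
  subset := hsub
  support := rowTableau_pos_iff
  row_weak _ _ _ hj hj' _ := by rw [rowTableau_of_inSkew hj, rowTableau_of_inSkew hj']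
  col_strict _ _ _ hi hi' hlt := by
    rw [rowTableau_of_inSkew hi, rowTableau_of_inSkew hi']
    omega
  content m := by rw [ncard_setOf_rowTableau_eq_succ, hmu]
  lattice := rowTableau_lattice hmu hanti

end RowTableau

section DistAlphaBeta

variable {k : ℕ} {lam : List ℕ}

lemma part_distAlpha (k : ℕ) (lam : List ℕ) (i : ℕ) :
    part (distAlpha k lam) i =
      if i < 2 * k then (if i < k then (part lam i + 1) / 2 else (part lam i - 1) / 2) else 0 :=
  part_map_range _ _ _

lemma part_distBeta (k : ℕ) (lam : List ℕ) (i : ℕ) :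
    part (distBeta k lam) i =
      if i < 2 * k then (if i < k then (part lam i - 1) / 2 else (part lam i + 1) / 2) else 0 :=
  part_map_range _ _ _

lemma part_distAlpha_le (k : ℕ) (lam : List ℕ) (i : ℕ) :
    part (distAlpha k lam) i ≤ part lam i := by
  rw [part_distAlpha]
  split_ifs <;> omega

lemma distAlpha_pairwise_ge (h : Antitone (part lam)) : (distAlpha k lam).Pairwise (· ≥ ·) := by
  refine pairwise_map_range_iff.mpr fun i j hij _ => ?_
  have := h hij.le
  split_ifs <;> omega

lemma part_distBeta_eq_sub (hlen : lam.length = 2 * k) (hodd : ∀ x ∈ lam, Odd x) (i : ℕ) :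
    part (distBeta k lam) i = part lam i - part (distAlpha k lam) i := by
  rw [part_distAlpha, part_distBeta]
  rcases lt_or_ge i (2 * k) with hi | hi
  · obtain ⟨a, ha⟩ := hodd _ (part_mem (hlen ▸ hi))
    simp only [if_pos hi]
    split_ifs <;> omega
  · simp [hi.not_gt, part_eq_zero_of_length_le (hlen ▸ hi)]

lemma part_add_two_le (hsort : lam.Pairwise (· > ·)) (hodd : ∀ x ∈ lam, Odd x) {i j : ℕ}
    (hij : i < j) (hj : j < lam.length) : part lam j + 2 ≤ part lam i := by
  obtain ⟨a, ha⟩ := hodd _ (part_mem (hij.trans hj))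
  obtain ⟨b, hb⟩ := hodd _ (part_mem hj)
  have := hsort.rel_part hij hj
  omega

lemma isPartition_distBeta (hlen : lam.length = 2 * k) (hsort : lam.Pairwise (· > ·))
    (hodd : ∀ x ∈ lam, Odd x) : IsPartition (distBeta k lam) := by
  have hpos : ∀ i < 2 * k, 0 < part lam i := fun i hi => (hodd _ (part_mem (hlen ▸ hi))).pos
  refine ⟨pairwise_map_range_iff.mpr fun i j hij hj => ?_, ?_⟩
  · have := part_add_two_le hsort hodd hij (hlen ▸ hj)
    split_ifs <;> omega
  · simp only [distBeta, List.mem_map, List.mem_range]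
    rintro _ ⟨i, hi, rfl⟩
    have := hpos i hi
    split_ifs with hik
    · have := part_add_two_le hsort hodd (show i < 2 * k - 1 by omega) (by omega)
      have := hpos (2 * k - 1) (by omega)
      omega
    · omega

end DistAlphaBeta

theorem distAlphaBeta_partitions_and_one_le_lrCoeff_general
    (k : ℕ) (lam : List ℕ)
    (hlen : lam.length = 2 * k)
    (hsort : lam.Pairwise (· > ·))
    (hodd : ∀ x ∈ lam, Odd x) :
    (distAlpha k lam).Pairwise (· ≥ ·) ∧
    IsPartition (distBeta k lam) ∧
    1 ≤ lrCoeff lam (distAlpha k lam) (distBeta k lam) := by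
  have hβ := isPartition_distBeta hlen hsort hodd
  refine ⟨distAlpha_pairwise_ge (antitone_part (hsort.imp le_of_lt)), hβ, ?_⟩
  exact lrCoeff_pos_of_isLRTableau <| isLRTableau_rowTableau (part_distAlpha_le k lam)
    (part_distBeta_eq_sub hlen hodd) (antitone_part hβ.1)

/-- For a partition `λ` with exactly `2k` parts, all odd and pairwise
distinct, the sequences `α` and `β` are partitions (weakly decreasing, `α`
possibly ending in a zero part) and `c^λ_{αβ} ≥ 1`. -/
theorem distAlphaBeta_partitions_and_one_le_lrCoeff
    (k : ℕ) (hk : 1 ≤ k) (lam : List ℕ)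
    (hlen : lam.length = 2 * k)
    (hsort : lam.Pairwise (· > ·))
    (hodd : ∀ x ∈ lam, Odd x) :
    (distAlpha k lam).Pairwise (· ≥ ·) ∧
    IsPartition (distBeta k lam) ∧
    1 ≤ lrCoeff lam (distAlpha k lam) (distBeta k lam) :=
  distAlphaBeta_partitions_and_one_le_lrCoeff_general k lam hlen hsort hodd
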